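/- For every formal power series v over ℝ with zero constant coefficient, there exists a unique formal power series u over ℝ with zero constant coefficient such that u + X·(1 − u)⁻¹ = v. -/

import Mathlib

open PowerSeries

/-- Coefficients of inverse of (1 - a) depend only on earlier coefficients of a. -/
lemma inv_coeff_congr (a b : PowerSeries ℝ) (n : ℕ)
    (h : ∀ k < n, PowerSeries.coeff k a = PowerSeries.coeff k b) :
    ∀ k < n, PowerSeries.coeff k ((1 - a)⁻¹) = PowerSeries.coeff k ((1 - b)⁻¹) := by
  intro k
  induction k using Nat.strong_induction_on with
  | _ k ih =>
    intro hk
    have hc : PowerSeries.constantCoeff (1 - a) = PowerSeries.constantCoeff (1 - b) := by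
      have := h 0 (Nat.lt_of_le_of_lt (Nat.zero_le k) hk)
      simp only [map_sub, map_one]
      simp only [PowerSeries.coeff_zero_eq_constantCoeff] at this
      rw [this]
    rw [PowerSeries.coeff_inv, PowerSeries.coeff_inv, hc]
    split_ifs with h0
    · rfl
    · congr 1
      apply Finset.sum_congr rfl
      intro x hx
      rw [Finset.HasAntidiagonal.mem_antidiagonal] at hx
      split_ifs with h2
      · have hx1 : x.1 ≤ k := by omega
        rw [map_sub, map_sub]
        rw [h x.1 (lt_of_le_of_lt hx1 hk)]
        rw [ih x.2 h2 (h2.trans hk)]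
      · rfl

noncomputable def gg (v : PowerSeries ℝ) : ℕ → ℝ
  | 0 => 0
  | n + 1 => PowerSeries.coeff (n + 1) v -
      PowerSeries.coeff n ((1 - PowerSeries.mk fun k => if h : k < n + 1 then gg v k else 0)⁻¹)
  decreasing_by exact h

theorem phi_bijective_on_zero_constant_term
    (v : PowerSeries ℝ) (hv : PowerSeries.constantCoeff v = 0) :
    ∃! u : PowerSeries ℝ,
      PowerSeries.constantCoeff u = 0 ∧ u + PowerSeries.X * (1 - u)⁻¹ = v := by
  set u : PowerSeries ℝ := PowerSeries.mk (gg v) with hu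
  have hcoeff : ∀ n, PowerSeries.coeff n u = gg v n := fun n => PowerSeries.coeff_mk n _
  have hagree : ∀ n, ∀ k < n + 1,
      PowerSeries.coeff k (PowerSeries.mk fun k => if h : k < n + 1 then gg v k else 0)
        = PowerSeries.coeff k u := by
    intro n k hk
    rw [PowerSeries.coeff_mk, hcoeff, dif_pos hk]
  have hu0 : PowerSeries.constantCoeff u = 0 := by
    rw [← PowerSeries.coeff_zero_eq_constantCoeff, hcoeff, gg]
  refine ⟨u, ⟨hu0, ?_⟩, ?_⟩
  · ext n
    cases n with
    | zero =>
      simp [hu0, hv]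
    | succ n =>
      rw [map_add, PowerSeries.coeff_succ_X_mul, hcoeff]
      have key := inv_coeff_congr _ u (n + 1) (hagree n) n (Nat.lt_succ_self n)
      show gg v (n + 1) + _ = _
      rw [gg, ← key]
      ring
  · rintro w ⟨hw0, hweq⟩
    ext n
    rw [hcoeff]
    induction n using Nat.strong_induction_on with
    | _ n ih =>
      cases n with
      | zero =>
        rw [PowerSeries.coeff_zero_eq_constantCoeff, hw0, gg]
      | succ n =>
        have := congrArg (PowerSeries.coeff (n + 1)) hweq
        rw [map_add, PowerSeries.coeff_succ_X_mul] at this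
        have key : PowerSeries.coeff n
            ((1 - PowerSeries.mk fun k => if h : k < n + 1 then gg v k else 0)⁻¹)
            = PowerSeries.coeff n ((1 - w)⁻¹) := by
          apply inv_coeff_congr _ _ (n + 1) _ n (Nat.lt_succ_self n)
          intro k hk
          rw [PowerSeries.coeff_mk, dif_pos hk, ih k hk]
        rw [gg, key]
        linarith
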